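/- arXiv:0901.4252 — 2 statements merged into one kernel-verified Lean document; each statement's English description precedes it below -/
import Mathlib

section
/- Let Σ and Σ̂ be symmetric m×m matrices, where Σ is diagonal with distinct diagonal entries λ_1 > λ_2 > … > λ_m and unit eigenvectors e_r. Then the r-th largest eigenvalue λ̂_r of Σ̂ satisfies |λ̂_r − λ_r − e_rᵀ(Σ̂ − Σ)e_r| ≤ 6 sup_{‖a‖=1} aᵀ(Σ̂ − Σ)²a / min_{s≠r} |λ_s − λ_r|. -/
/-!
Put `E = Σ̂ - Σ` and let `s² = S` be the supremum in the bound, so that `‖E a‖ ≤ s ‖a‖`.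
Weyl's inequality `|λ̂_r - λ_r| ≤ s` is min–max: counting dimensions, some `x ≠ 0` lies in the
span of the eigenvectors of one matrix with index `≤ r` and in that of the other with index `≥ r`,
and there the two Rayleigh quotients are `≥` and `≤` the respective `r`-th eigenvalues.
Also `|E_rr| ≤ s`, so the claim is immediate when the gap `δ` is at most `3s`.
Otherwise let `u` be a unit eigenvector of `Σ̂` for `λ̂_r` and `t = ∑_{i ≠ r} u_i²`. Since
`(E u)_i = (λ̂_r - λ_i) u_i` with `|λ̂_r - λ_i| ≥ δ - s` for `i ≠ r`, we get `(δ - s)² t ≤ s²`;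
the `r`-th coordinate reads `X u_r = ∑_{i ≠ r} E_ri u_i` for `X = λ̂_r - λ_r - E_rr`, so
Cauchy–Schwarz gives `X² (1 - t) ≤ s² t`. Together they force `|X| δ ≤ √3 s²`.
-/

open Matrix

section DotProduct

variable {n : Type*} [Fintype n] {E : Matrix n n ℝ} {s : ℝ}

theorem dotProduct_self_nonneg (x : n → ℝ) : 0 ≤ x ⬝ᵥ x :=
  Finset.sum_nonneg fun i _ => mul_self_nonneg (x i)

theorem dotProduct_sq_le (x y : n → ℝ) : (x ⬝ᵥ y) ^ 2 ≤ (x ⬝ᵥ x) * (y ⬝ᵥ y) := by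
  simpa only [dotProduct, sq] using Finset.sum_mul_sq_le_sq_mul_sq Finset.univ x y

theorem exists_ne_zero_mulVec_eq_zero_of_card_lt {ι : Type*} [Fintype ι] (M : Matrix ι n ℝ)
    (h : Fintype.card ι < Fintype.card n) : ∃ x ≠ 0, M *ᵥ x = 0 := by
  have := LinearMap.ker_ne_bot_of_finrank_lt (f := M.mulVecLin) (by simpa using h)
  obtain ⟨x, hx, hx0⟩ := (Submodule.ne_bot_iff _).mp this
  exact ⟨x, hx0, hx⟩

theorem mulVec_dotProduct_mulVec_le_sSup (hE : E.IsSymm) (a : n → ℝ) :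
    E *ᵥ a ⬝ᵥ E *ᵥ a ≤
      sSup {x : ℝ | ∃ a : n → ℝ, (∑ i, a i ^ 2 = 1) ∧ x = a ⬝ᵥ (E * E) *ᵥ a} * (a ⬝ᵥ a) := by
  have hquad (b : n → ℝ) : b ⬝ᵥ (E * E) *ᵥ b = E *ᵥ b ⬝ᵥ E *ᵥ b := by
    rw [← mulVec_mulVec, dotProduct_mulVec, ← mulVec_transpose, hE.eq]
  set K := {x : ℝ | ∃ a : n → ℝ, (∑ i, a i ^ 2 = 1) ∧ x = a ⬝ᵥ (E * E) *ᵥ a}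
  have hbdd : BddAbove K := by
    refine ⟨∑ i, ∑ j, E i j ^ 2, ?_⟩
    rintro _ ⟨b, hb, rfl⟩
    rw [hquad, dotProduct]
    refine Finset.sum_le_sum fun i _ => ?_
    simpa [← sq, mulVec, dotProduct, hb] using Finset.sum_mul_sq_le_sq_mul_sq Finset.univ (E i) b
  rcases eq_or_ne a 0 with rfl | ha
  · simp
  set c := √(a ⬝ᵥ a)
  have hc : 0 < c := Real.sqrt_pos.mpr (by simpa using dotProduct_star_self_pos_iff.mpr ha)
  have hcc : c ^ 2 = a ⬝ᵥ a := Real.sq_sqrt (dotProduct_self_nonneg a)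
  have hunit : ∑ i, (c⁻¹ • a) i ^ 2 = 1 := by
    simp only [Pi.smul_apply, smul_eq_mul, mul_pow, ← Finset.mul_sum]
    rw [show ∑ i, a i ^ 2 = a ⬝ᵥ a by simp [dotProduct, sq], ← hcc]
    field_simp
  have hle : E *ᵥ (c⁻¹ • a) ⬝ᵥ E *ᵥ (c⁻¹ • a) ≤ sSup K := le_csSup hbdd ⟨_, hunit, (hquad _).symm⟩
  calc E *ᵥ a ⬝ᵥ E *ᵥ a = c ^ 2 * (E *ᵥ (c⁻¹ • a) ⬝ᵥ E *ᵥ (c⁻¹ • a)) := by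
        rw [mulVec_smul, smul_dotProduct, dotProduct_smul, smul_eq_mul, smul_eq_mul]
        field_simp
    _ ≤ c ^ 2 * sSup K := mul_le_mul_of_nonneg_left hle (sq_nonneg c)
    _ = sSup K * (a ⬝ᵥ a) := by rw [hcc, mul_comm]

theorem abs_dotProduct_mulVec_le (hs : 0 ≤ s)
    (hE : ∀ a, E *ᵥ a ⬝ᵥ E *ᵥ a ≤ s ^ 2 * (a ⬝ᵥ a)) (x : n → ℝ) :
    |x ⬝ᵥ E *ᵥ x| ≤ s * (x ⬝ᵥ x) := by
  have hxx := dotProduct_self_nonneg x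
  refine abs_le_of_sq_le_sq ?_ (mul_nonneg hs hxx)
  calc (x ⬝ᵥ E *ᵥ x) ^ 2 ≤ (x ⬝ᵥ x) * (E *ᵥ x ⬝ᵥ E *ᵥ x) := dotProduct_sq_le _ _
    _ ≤ (x ⬝ᵥ x) * (s ^ 2 * (x ⬝ᵥ x)) := mul_le_mul_of_nonneg_left (hE x) hxx
    _ = (s * (x ⬝ᵥ x)) ^ 2 := by ring

theorem sum_sq_apply_le (hE : ∀ a, E *ᵥ a ⬝ᵥ E *ᵥ a ≤ s ^ 2 * (a ⬝ᵥ a)) (j : n) :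
    ∑ i, E i j ^ 2 ≤ s ^ 2 := by
  classical
  simpa [mulVec_single_one, dotProduct, sq, Pi.single_apply] using hE (Pi.single j 1)

end DotProduct

section Orthogonal

variable {n : Type*} [Fintype n] [DecidableEq n] {V A : Matrix n n ℝ} {α : n → ℝ}

theorem of_mem_orthogonalGroup {v : n → n → ℝ}
    (hv : ∀ i j, v i ⬝ᵥ v j = if i = j then 1 else 0) : of v ∈ orthogonalGroup n ℝ := by
  rw [mem_orthogonalGroup_iff]
  ext i j
  simpa [mul_apply, one_apply, dotProduct] using hv i j

theorem mulVec_dotProduct_mulVec_of_mem_orthogonalGroup (hV : V ∈ orthogonalGroup n ℝ)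
    (x : n → ℝ) : V *ᵥ x ⬝ᵥ V *ᵥ x = x ⬝ᵥ x := by
  rw [dotProduct_mulVec, ← mulVec_transpose, mulVec_mulVec, (mem_orthogonalGroup_iff' _ _).mp hV,
    one_mulVec]

theorem eq_transpose_mul_diagonal_mul (hV : V ∈ orthogonalGroup n ℝ)
    (hA : ∀ j, A *ᵥ V j = α j • V j) : A = Vᵀ * diagonal α * V := by
  have hAV : A * Vᵀ = Vᵀ * diagonal α := by
    ext i j
    rw [mul_diagonal]
    simpa [mul_apply, mulVec, dotProduct, mul_comm] using congrFun (hA j) i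
  rw [← hAV, Matrix.mul_assoc, (mem_orthogonalGroup_iff' _ _).mp hV, Matrix.mul_one]

theorem dotProduct_mulVec_eq_sum (hV : V ∈ orthogonalGroup n ℝ)
    (hA : ∀ j, A *ᵥ V j = α j • V j) (x : n → ℝ) :
    x ⬝ᵥ A *ᵥ x = ∑ i, α i * (V *ᵥ x) i ^ 2 := by
  rw [eq_transpose_mul_diagonal_mul hV hA, ← mulVec_mulVec, ← mulVec_mulVec, dotProduct_mulVec,
    vecMul_transpose]
  simp only [dotProduct, mulVec_diagonal]
  exact Finset.sum_congr rfl fun i _ => by ring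

theorem diagonal_mulVec_one_apply (d : n → ℝ) (j : n) :
    diagonal d *ᵥ (1 : Matrix n n ℝ) j = d j • (1 : Matrix n n ℝ) j := by
  ext i
  rcases eq_or_ne i j with rfl | h
  · simp [mulVec_diagonal]
  · simp [one_apply, mulVec_diagonal, h.symm]

end Orthogonal

section Weyl

variable {n : Type*} [Fintype n] [LinearOrder n] {A B V W : Matrix n n ℝ} {α β : n → ℝ}

theorem exists_ne_zero_mulVec_apply_eq_zero (V W : Matrix n n ℝ) (r : n) :
    ∃ x ≠ 0, (∀ i, r < i → (V *ᵥ x) i = 0) ∧ ∀ i, i < r → (W *ᵥ x) i = 0 := by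
  let M : Matrix {i // i ≠ r} n ℝ := of fun i => if r < i.1 then V i else W i
  have hcard : Fintype.card {i // i ≠ r} < Fintype.card n :=
    Fintype.card_subtype_lt (p := (· ≠ r)) (not_not.mpr rfl)
  obtain ⟨x, hx0, hMx⟩ := exists_ne_zero_mulVec_eq_zero_of_card_lt M hcard
  refine ⟨x, hx0, fun i hi => ?_, fun i hi => ?_⟩
  · simpa [M, mulVec, hi] using congrFun hMx ⟨i, hi.ne'⟩
  · simpa [M, mulVec, hi.not_gt] using congrFun hMx ⟨i, hi.ne⟩

theorem le_add_of_dotProduct_mulVec_sub_le (hV : V ∈ orthogonalGroup n ℝ)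
    (hW : W ∈ orthogonalGroup n ℝ) (hα : Antitone α) (hβ : Antitone β)
    (hA : ∀ j, A *ᵥ V j = α j • V j) (hB : ∀ j, B *ᵥ W j = β j • W j) {c : ℝ}
    (hc : ∀ x, x ⬝ᵥ A *ᵥ x - x ⬝ᵥ B *ᵥ x ≤ c * (x ⬝ᵥ x)) (r : n) : α r ≤ β r + c := by
  obtain ⟨x, hx0, hVx, hWx⟩ := exists_ne_zero_mulVec_apply_eq_zero V W r
  have hAx : α r * (x ⬝ᵥ x) ≤ x ⬝ᵥ A *ᵥ x := by
    rw [dotProduct_mulVec_eq_sum hV hA, ← mulVec_dotProduct_mulVec_of_mem_orthogonalGroup hV,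
      dotProduct, Finset.mul_sum]
    refine Finset.sum_le_sum fun i _ => ?_
    rcases le_or_gt i r with h | h
    · nlinarith [hα h, mul_self_nonneg ((V *ᵥ x) i)]
    · simp [hVx i h]
  have hBx : x ⬝ᵥ B *ᵥ x ≤ β r * (x ⬝ᵥ x) := by
    rw [dotProduct_mulVec_eq_sum hW hB, ← mulVec_dotProduct_mulVec_of_mem_orthogonalGroup hW,
      dotProduct, Finset.mul_sum]
    refine Finset.sum_le_sum fun i _ => ?_
    rcases le_or_gt r i with h | h
    · nlinarith [hβ h, mul_self_nonneg ((W *ᵥ x) i)]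
    · simp [hWx i h]
  have hxx : 0 < x ⬝ᵥ x := by
    simpa using dotProduct_star_self_pos_iff.mpr hx0
  nlinarith [hc x]

theorem abs_sub_le_of_abs_dotProduct_mulVec_sub_le (hV : V ∈ orthogonalGroup n ℝ)
    (hW : W ∈ orthogonalGroup n ℝ) (hα : Antitone α) (hβ : Antitone β)
    (hA : ∀ j, A *ᵥ V j = α j • V j) (hB : ∀ j, B *ᵥ W j = β j • W j) {c : ℝ}
    (hc : ∀ x, |x ⬝ᵥ A *ᵥ x - x ⬝ᵥ B *ᵥ x| ≤ c * (x ⬝ᵥ x)) (r : n) : |α r - β r| ≤ c := by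
  have h₁ := le_add_of_dotProduct_mulVec_sub_le hV hW hα hβ hA hB
    (fun x => (le_abs_self _).trans (hc x)) r
  have h₂ := le_add_of_dotProduct_mulVec_sub_le hW hV hβ hα hB hA
    (fun x => (le_abs_self _).trans ((abs_sub_comm _ _).trans_le (hc x))) r
  rw [abs_le]
  constructor <;> linarith

end Weyl

theorem abs_mul_le_of_sq_mul_le {X s t δ : ℝ} (hs : 0 ≤ s) (ht : 0 ≤ t) (hδ : 3 * s < δ)
    (hgap : (δ - s) ^ 2 * t ≤ s ^ 2) (hX : X ^ 2 * (1 - t) ≤ s ^ 2 * t) :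
    |X| * δ ≤ 6 * s ^ 2 := by
  have hδs : 2 / 3 * δ ≤ δ - s := by linarith
  have ht₁ : t ≤ 1 / 4 := by nlinarith
  have ht₂ : δ ^ 2 * t ≤ 9 / 4 * s ^ 2 := by
    have := pow_le_pow_left₀ (by linarith) hδs 2
    nlinarith [mul_le_mul_of_nonneg_right this ht]
  have hXδ : (X * δ) ^ 2 ≤ (6 * s ^ 2) ^ 2 := by nlinarith [sq_nonneg X, sq_nonneg δ]
  rw [← abs_of_pos (hs.trans_lt (by linarith) : 0 < δ), ← abs_mul]
  exact abs_le_of_sq_le_sq hXδ (by positivity)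

section Eigenpair

variable {n : Type*} [Fintype n] [DecidableEq n] {A : Matrix n n ℝ} {lam u : n → ℝ}
  {μ s δ : ℝ} {r : n}

theorem mulVec_sub_diagonal_apply (hu : A *ᵥ u = μ • u) (i : n) :
    ((A - diagonal lam) *ᵥ u) i = (μ - lam i) * u i := by
  simp [sub_mulVec, hu, mulVec_diagonal, sub_mul]

theorem sub_sq_mul_sum_erase_sq_le (hs : 0 ≤ s) (hδ : 3 * s < δ)
    (hnorm : ∀ a, (A - diagonal lam) *ᵥ a ⬝ᵥ (A - diagonal lam) *ᵥ a ≤ s ^ 2 * (a ⬝ᵥ a))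
    (hu : A *ᵥ u = μ • u) (huu : u ⬝ᵥ u = 1) (hμ : |μ - lam r| ≤ s)
    (hgap : ∀ i ≠ r, δ ≤ |lam i - lam r|) :
    (δ - s) ^ 2 * ∑ i ∈ Finset.univ.erase r, u i ^ 2 ≤ s ^ 2 := by
  have hgap' (i : n) (hi : i ≠ r) : (δ - s) ^ 2 ≤ (μ - lam i) ^ 2 := by
    have := (hgap i hi).trans (abs_sub_le (lam i) μ (lam r))
    rw [abs_sub_comm] at this
    rw [← sq_abs (μ - lam i)]
    exact pow_le_pow_left₀ (by linarith) (by linarith) 2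
  calc (δ - s) ^ 2 * ∑ i ∈ Finset.univ.erase r, u i ^ 2
      ≤ ∑ i ∈ Finset.univ.erase r, ((A - diagonal lam) *ᵥ u) i ^ 2 := by
        rw [Finset.mul_sum]
        refine Finset.sum_le_sum fun i hi => ?_
        rw [mulVec_sub_diagonal_apply hu, mul_pow]
        exact mul_le_mul_of_nonneg_right (hgap' i (Finset.ne_of_mem_erase hi)) (sq_nonneg _)
    _ ≤ ∑ i, ((A - diagonal lam) *ᵥ u) i ^ 2 :=
        Finset.sum_le_sum_of_subset_of_nonneg (Finset.erase_subset _ _) fun _ _ _ => sq_nonneg _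
    _ = (A - diagonal lam) *ᵥ u ⬝ᵥ (A - diagonal lam) *ᵥ u := by simp only [dotProduct, sq]
    _ ≤ s ^ 2 := by simpa [huu] using hnorm u

theorem sq_mul_one_sub_sum_erase_sq_le (hA : A.IsSymm)
    (hnorm : ∀ a, (A - diagonal lam) *ᵥ a ⬝ᵥ (A - diagonal lam) *ᵥ a ≤ s ^ 2 * (a ⬝ᵥ a))
    (hu : A *ᵥ u = μ • u) (huu : u ⬝ᵥ u = 1) :
    (μ - lam r - (A - diagonal lam) r r) ^ 2 * (1 - ∑ i ∈ Finset.univ.erase r, u i ^ 2)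
      ≤ s ^ 2 * ∑ i ∈ Finset.univ.erase r, u i ^ 2 := by
  set E := A - diagonal lam
  set t := ∑ i ∈ Finset.univ.erase r, u i ^ 2
  have hur : u r ^ 2 = 1 - t := by
    rw [← huu, dotProduct, ← Finset.add_sum_erase _ _ (Finset.mem_univ r)]
    simp only [t, sq, add_sub_cancel_right]
  have hrow : (μ - lam r - E r r) * u r = ∑ i ∈ Finset.univ.erase r, E r i * u i := by
    have h := mulVec_sub_diagonal_apply (lam := lam) hu r
    rw [mulVec, dotProduct, ← Finset.add_sum_erase _ _ (Finset.mem_univ r)] at h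
    linarith
  have hErow : ∑ i ∈ Finset.univ.erase r, E r i ^ 2 ≤ s ^ 2 :=
    calc _ ≤ ∑ i, E r i ^ 2 :=
          Finset.sum_le_sum_of_subset_of_nonneg (Finset.erase_subset _ _) fun _ _ _ => sq_nonneg _
      _ = ∑ i, E i r ^ 2 := by
          simp only [E, (hA.sub (isSymm_diagonal lam)).apply r]
      _ ≤ s ^ 2 := sum_sq_apply_le hnorm r
  calc (μ - lam r - E r r) ^ 2 * (1 - t) = ((μ - lam r - E r r) * u r) ^ 2 := by
        rw [mul_pow, hur]
    _ ≤ (∑ i ∈ Finset.univ.erase r, E r i ^ 2) * t := by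
        rw [hrow]; exact Finset.sum_mul_sq_le_sq_mul_sq _ _ _
    _ ≤ s ^ 2 * t := mul_le_mul_of_nonneg_right hErow (Finset.sum_nonneg fun _ _ => sq_nonneg _)

theorem abs_eigenvalue_sub_sub_mul_le (hA : A.IsSymm) (hs : 0 ≤ s)
    (hnorm : ∀ a, (A - diagonal lam) *ᵥ a ⬝ᵥ (A - diagonal lam) *ᵥ a ≤ s ^ 2 * (a ⬝ᵥ a))
    (hu : A *ᵥ u = μ • u) (huu : u ⬝ᵥ u = 1) (hμ : |μ - lam r| ≤ s)
    (hgap : ∀ i ≠ r, δ ≤ |lam i - lam r|) (hδ : 0 ≤ δ) :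
    |μ - lam r - (A - diagonal lam) r r| * δ ≤ 6 * s ^ 2 := by
  rcases le_or_gt δ (3 * s) with hδs | hδs
  · have hErr : |(A - diagonal lam) r r| ≤ s := abs_le_of_sq_le_sq
      ((Finset.single_le_sum (f := fun i => (A - diagonal lam) i r ^ 2)
        (fun i _ => sq_nonneg _) (Finset.mem_univ r)).trans
        (sum_sq_apply_le hnorm r)) hs
    calc _ ≤ (2 * s) * (3 * s) :=
          mul_le_mul ((abs_sub _ _).trans (by linarith)) hδs hδ (by positivity)
      _ = 6 * s ^ 2 := by ring
  · exact abs_mul_le_of_sq_mul_le hs (Finset.sum_nonneg fun _ _ => sq_nonneg _) hδs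
      (sub_sq_mul_sum_erase_sq_le hs hδs hnorm hu huu hμ hgap)
      (sq_mul_one_sub_sum_erase_sq_le hA hnorm hu huu)

end Eigenpair

theorem ciInf_abs_sub_pos {n : Type*} [Finite n] [Nontrivial n] {lam : n → ℝ}
    (hlam : Function.Injective lam) (r : n) : 0 < ⨅ s : {s : n // s ≠ r}, |lam s - lam r| := by
  have : Nonempty {s : n // s ≠ r} := nonempty_subtype.mpr (exists_ne r)
  obtain ⟨s, hs⟩ := exists_eq_ciInf_of_finite (f := fun s : {s : n // s ≠ r} => |lam s - lam r|)
  rw [← hs]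
  exact abs_pos.mpr (sub_ne_zero.mpr (hlam.ne s.2))

/-- (Lemma A of Kneip–Utikal.) Let `D = diagonal lam` with strictly
decreasing diagonal and let `Shat` be symmetric with r-th largest eigenvalue
`lamhat r`. Then
`|lamhat r − lam r − e_rᵀ(Shat − D)e_r| ≤ 6 sup_{‖a‖=1} aᵀ(Shat − D)²a / min_{s≠r}|lam s − lam r|`. -/
theorem eigenvalue_perturbation_bound
    (m : ℕ) (hm : 1 < m) (lam : Fin m → ℝ) (hlam : StrictAnti lam)
    (Shat : Matrix (Fin m) (Fin m) ℝ) (hsymm : Shat.IsSymm)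
    (lamhat : Fin m → ℝ) (hanti : Antitone lamhat)
    -- `lamhat` enumerates the eigenvalues of `Shat` (orthonormal eigenbasis)
    (hdiag : ∃ v : Fin m → (Fin m → ℝ),
      (∀ i j, v i ⬝ᵥ v j = if i = j then 1 else 0) ∧
      (∀ j, Shat.mulVec (v j) = lamhat j • v j))
    (r : Fin m) :
    |lamhat r - lam r - (Shat - Matrix.diagonal lam) r r|
      ≤ 6 * sSup {x : ℝ | ∃ a : Fin m → ℝ, (∑ i, (a i) ^ 2 = 1) ∧
            x = a ⬝ᵥ (((Shat - Matrix.diagonal lam)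
              * (Shat - Matrix.diagonal lam)).mulVec a)}
        / ⨅ s : {s : Fin m // s ≠ r}, |lam s - lam r| := by
  obtain ⟨v, hv, hSv⟩ := hdiag
  have : Nontrivial (Fin m) := Fin.nontrivial_iff_two_le.mpr hm
  have hnormS := mulVec_dotProduct_mulVec_le_sSup (hsymm.sub (isSymm_diagonal lam))
  set S := sSup {x : ℝ | ∃ a : Fin m → ℝ, (∑ i, (a i) ^ 2 = 1) ∧
    x = a ⬝ᵥ (((Shat - Matrix.diagonal lam) * (Shat - Matrix.diagonal lam)).mulVec a)}
  have hS : 0 ≤ S := by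
    simpa using (dotProduct_self_nonneg _).trans (hnormS (Pi.single r 1))
  have hnorm : ∀ a, (Shat - diagonal lam) *ᵥ a ⬝ᵥ (Shat - diagonal lam) *ᵥ a
      ≤ √S ^ 2 * (a ⬝ᵥ a) := by
    rwa [Real.sq_sqrt hS]
  have hweyl : |lamhat r - lam r| ≤ √S :=
    abs_sub_le_of_abs_dotProduct_mulVec_sub_le (of_mem_orthogonalGroup hv) (one_mem _) hanti
      hlam.antitone hSv (diagonal_mulVec_one_apply lam) (fun x => by
        rw [← dotProduct_sub, ← sub_mulVec]
        exact abs_dotProduct_mulVec_le (Real.sqrt_nonneg S) hnorm x) r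
  have hδ := ciInf_abs_sub_pos hlam.injective r
  rw [le_div_iff₀ hδ, ← Real.sq_sqrt hS]
  exact abs_eigenvalue_sub_sub_mul_le hsymm (Real.sqrt_nonneg S) hnorm (hSv r)
    (by simpa using hv r r) hweyl
    (fun i hi => ciInf_le (Set.finite_range _).bddBelow (⟨i, hi⟩ : {s // s ≠ r})) hδ.le
end

section
/- Under the assumptions of Theorem 3(ii) (independent samples each satisfying Assumption 1, with λ_r^{(p)} a simple eigenvalue for p = 1,2), the statistic n·Δ_{3,r} = n|λ̂_r^{(1)} − λ̂_r^{(2)}|², computed under the null hypothesis λ_r^{(1)} = λ_r^{(2)}, satisfies n Δ_{3,r} / (Λ_r^{(1)}/q_1 + Λ_r^{(2)}/q_2) → χ²_1 in distribution, where n_p = q_p n and Λ_r^{(p)} = E[(β_{ri}^{(p)})² − λ_r^{(p)}]². -/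
/-!
The rescaled errors `X n = √n₁ (λ̂⁽¹⁾ − λ)` and `Y n = √n₂ (λ̂⁽²⁾ − λ)` are independent, so the
pair `(X n, Y n)` converges in distribution to the product `N(0, Λ₁) ⊗ N(0, Λ₂)` of the limits.
With `s = Λ₁/q₁ + Λ₂/q₂`, the normalised statistic is `n Δ₃ / s = (aₙ X n + bₙ Y n)²` for the
deterministic coefficients `aₙ = √(n/(n₁ s)) → a = (q₁ s)^(-1/2)` and
`bₙ = -√(n/(n₂ s)) → b = -(q₂ s)^(-1/2)`, so by Slutsky's theorem it converges in distribution to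
`(a Z₁ + b Z₂)²`. Finally `a Z₁ + b Z₂` is standard Gaussian because `a² Λ₁ + b² Λ₂ = 1`.
-/

open MeasureTheory ProbabilityTheory Filter BoundedContinuousFunction
open scoped Topology NNReal

namespace MeasureTheory

variable {ι E F Ω' : Type*} {Ω : ι → Type*} {m : ∀ i, MeasurableSpace (Ω i)}
  {μ : (i : ι) → Measure (Ω i)} [∀ i, IsProbabilityMeasure (μ i)]
  {m' : MeasurableSpace Ω'} {μ' : Measure Ω'} [IsProbabilityMeasure μ']
  [TopologicalSpace E] [MeasurableSpace E] [OpensMeasurableSpace E]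
  {X : (i : ι) → Ω i → E} {Z : Ω' → E} {l : Filter ι}

lemma tendstoInDistribution_iff_forall_integral_tendsto
    (hX : ∀ i, AEMeasurable (X i) (μ i)) (hZ : AEMeasurable Z μ') :
    TendstoInDistribution X l Z μ μ' ↔
      ∀ f : E →ᵇ ℝ, Tendsto (fun i ↦ ∫ ω, f (X i ω) ∂(μ i)) l (𝓝 (∫ ω, f (Z ω) ∂μ')) := by
  refine ⟨fun h f ↦ ?_, fun h ↦ ⟨hX, hZ, ?_⟩⟩
  · have := ProbabilityMeasure.tendsto_iff_forall_integral_tendsto.1 h.tendsto f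
    simp only [ProbabilityMeasure.coe_mk] at this
    rwa [integral_map hZ f.continuous.aestronglyMeasurable,
      funext fun i ↦ integral_map (hX i) f.continuous.aestronglyMeasurable] at this
  · refine ProbabilityMeasure.tendsto_iff_forall_integral_tendsto.2 fun f ↦ ?_
    simp only [ProbabilityMeasure.coe_mk]
    rw [integral_map hZ f.continuous.aestronglyMeasurable,
      funext fun i ↦ integral_map (hX i) f.continuous.aestronglyMeasurable]
    exact h f

theorem TendstoInDistribution.prodMk_of_indepFun
    [SecondCountableTopology E] [TopologicalSpace.PseudoMetrizableSpace E]
    [TopologicalSpace F] [MeasurableSpace F] [OpensMeasurableSpace F]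
    [SecondCountableTopology F] [TopologicalSpace.PseudoMetrizableSpace F]
    {Y : (i : ι) → Ω i → F} {ρ : Measure E} {ν : Measure F} [IsProbabilityMeasure ρ]
    [IsProbabilityMeasure ν]
    (hX : TendstoInDistribution X l id μ ρ) (hY : TendstoInDistribution Y l id μ ν)
    (hXY : ∀ i, IndepFun (X i) (Y i) (μ i)) :
    TendstoInDistribution (fun i ω ↦ (X i ω, Y i ω)) l id μ (ρ.prod ν) where
  forall_aemeasurable i := (hX.forall_aemeasurable i).prodMk (hY.forall_aemeasurable i)
  aemeasurable_limit := aemeasurable_id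
  tendsto := by
    have hlaw : ∀ i, (μ i).map (fun ω ↦ (X i ω, Y i ω)) =
        ((μ i).map (X i)).prod ((μ i).map (Y i)) := fun i ↦
      (hXY i).map_prod_eq_prod_map_map (hX.forall_aemeasurable i) (hY.forall_aemeasurable i)
    have hlim : (⟨(ρ.prod ν).map id, Measure.isProbabilityMeasure_map aemeasurable_id⟩ :
        ProbabilityMeasure (E × F)) =
        ProbabilityMeasure.prod ⟨ρ.map id, Measure.isProbabilityMeasure_map aemeasurable_id⟩
          ⟨ν.map id, Measure.isProbabilityMeasure_map aemeasurable_id⟩ :=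
      Subtype.ext (by simp [ProbabilityMeasure.prod])
    rw [hlim]
    exact Tendsto.congr (fun i ↦ Subtype.ext (hlaw i).symm)
      ((ProbabilityMeasure.continuous_prod.tendsto _).comp (hX.tendsto.prodMk_nhds hY.tendsto))

lemma tendstoInMeasure_const_of_tendsto {α G : Type*} {_ : MeasurableSpace α} {ν : Measure α}
    [PseudoEMetricSpace G] {c : ι → G} {c₀ : G} (h : Tendsto c l (𝓝 c₀)) :
    TendstoInMeasure ν (fun i _ ↦ c i) l (fun _ ↦ c₀) := by
  intro ε hε
  refine tendsto_const_nhds.congr' ?_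
  filter_upwards [EMetric.tendsto_nhds.1 h ε hε] with i hi
  simp [not_le.2 hi]

end MeasureTheory

namespace ProbabilityTheory

lemma gaussianReal_prod_map_linear {v₁ v₂ v : ℝ≥0} (a b : ℝ)
    (h : a ^ 2 * v₁ + b ^ 2 * v₂ = (v : ℝ)) :
    ((gaussianReal 0 v₁).prod (gaussianReal 0 v₂)).map (fun z ↦ a * z.1 + b * z.2) =
      gaussianReal 0 v := by
  calc ((gaussianReal 0 v₁).prod (gaussianReal 0 v₂)).map (fun z ↦ a * z.1 + b * z.2)
      = (((gaussianReal 0 v₁).map (a * ·)).prod ((gaussianReal 0 v₂).map (b * ·))).map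
          (fun z ↦ z.1 + z.2) := by
        rw [Measure.map_prod_map _ _ (by fun_prop) (by fun_prop),
          Measure.map_map (by fun_prop) (by fun_prop)]
        rfl
    _ = gaussianReal 0 (⟨a ^ 2, sq_nonneg a⟩ * v₁) ∗
          gaussianReal 0 (⟨b ^ 2, sq_nonneg b⟩ * v₂) := by
        rw [gaussianReal_map_const_mul, gaussianReal_map_const_mul, mul_zero, mul_zero]
        rfl
    _ = gaussianReal 0 v := by
        rw [gaussianReal_conv_gaussianReal, add_zero]
        congr
        exact NNReal.eq h

lemma gaussianReal_prod_map_sq_linear {v₁ v₂ : ℝ≥0} {a b : ℝ}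
    (h : a ^ 2 * v₁ + b ^ 2 * v₂ = 1) :
    ((gaussianReal 0 v₁).prod (gaussianReal 0 v₂)).map (fun z ↦ (a * z.1 + b * z.2) ^ 2) =
      (gaussianReal 0 1).map (· ^ 2) := by
  rw [← gaussianReal_prod_map_linear a b (v := 1) (by simpa using h),
    Measure.map_map (by fun_prop) (by fun_prop)]
  rfl

end ProbabilityTheory

lemma eventually_pos_of_tendsto_div {m : ℕ → ℕ} {q : ℝ}
    (hm : Tendsto (fun n : ℕ ↦ (m n : ℝ) / n) atTop (𝓝 q)) (hq : 0 < q) :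
    ∀ᶠ n in atTop, 0 < m n := by
  filter_upwards [hm.eventually (eventually_gt_nhds hq)] with n hn
  refine Nat.pos_of_ne_zero fun h ↦ ?_
  simp [h] at hn

lemma tendsto_sqrt_div_mul {m : ℕ → ℕ} {q s : ℝ}
    (hm : Tendsto (fun n : ℕ ↦ (m n : ℝ) / n) atTop (𝓝 q)) (hq : q ≠ 0) (hs : s ≠ 0) :
    Tendsto (fun n : ℕ ↦ √(n / (m n * s))) atTop (𝓝 √((q * s)⁻¹)) := by
  have h := ((hm.mul_const s).inv₀ (mul_ne_zero hq hs)).sqrt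
  refine h.congr fun n ↦ ?_
  rw [mul_inv, inv_div, ← div_eq_mul_inv, div_div]

lemma Real.sqrt_div_mul_mul_sqrt (x s : ℝ) {y : ℝ} (hy : 0 < y) :
    √(x / (y * s)) * √y = √(x / s) := by
  rw [← Real.sqrt_mul' _ hy.le]
  congr 1
  field_simp

lemma sq_rescaled_sub_eq {n y₁ y₂ s : ℝ} (hn : 0 ≤ n) (hy₁ : 0 < y₁) (hy₂ : 0 < y₂) (hs : 0 < s)
    (x₁ x₂ r : ℝ) :
    (√(n / (y₁ * s)) * (√y₁ * (x₁ - r)) + -√(n / (y₂ * s)) * (√y₂ * (x₂ - r))) ^ 2 =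
      n * |x₁ - x₂| ^ 2 / s := by
  rw [neg_mul, ← mul_assoc, ← mul_assoc, Real.sqrt_div_mul_mul_sqrt _ _ hy₁,
    Real.sqrt_div_mul_mul_sqrt _ _ hy₂, ← sub_eq_add_neg, ← mul_sub, mul_pow,
    Real.sq_sqrt (by positivity), sq_abs]
  ring

/-- Under the assumptions of Theorem 3(ii) (two independent samples
of sizes `n₁ = q₁ n`, `n₂ = q₂ n`, each with `√n_p (λ̂ᵣ⁽ᵖ⁾ − lamᵣ) → N(0, Λᵣ⁽ᵖ⁾)` by
Theorem 2(ii)), under the null `lamᵣ⁽¹⁾ = lamᵣ⁽²⁾ = lamr` the statistic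
`n Δ₃ᵣ = n |λ̂ᵣ⁽¹⁾ − λ̂ᵣ⁽²⁾|²` satisfies
`n Δ₃ᵣ / (Λᵣ⁽¹⁾/q₁ + Λᵣ⁽²⁾/q₂) → χ²₁` in distribution (the law of the square of a
standard Gaussian). -/
theorem two_sample_eigenvalue_test_chi_squared
    {Ω : Type*} [MeasurableSpace Ω] (P : Measure Ω) [IsProbabilityMeasure P]
    (lamhat1 lamhat2 : ℕ → Ω → ℝ) (lamr : ℝ) (Λ1 Λ2 : ℝ) (q1 q2 : ℝ)
    (hq1 : 0 < q1) (hq2 : 0 < q2)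
    (n1 n2 : ℕ → ℕ)
    (hn1 : Tendsto (fun n : ℕ => (n1 n : ℝ) / n) atTop (𝓝 q1))
    (hn2 : Tendsto (fun n : ℕ => (n2 n : ℝ) / n) atTop (𝓝 q2))
    (hmeas1 : ∀ n, Measurable (lamhat1 n)) (hmeas2 : ∀ n, Measurable (lamhat2 n))
    (hΛ1 : 0 < Λ1) (hΛ2 : 0 < Λ2)
    -- the two samples are independent
    (hindep : ∀ n, IndepFun (lamhat1 n) (lamhat2 n) P)
    -- Theorem 2(ii): `√n_p (λ̂ᵣ⁽ᵖ⁾ − lamᵣ) → N(0, Λᵣ⁽ᵖ⁾)` in distribution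
    (hclt1 : ∀ f : BoundedContinuousFunction ℝ ℝ,
      Tendsto (fun n : ℕ =>
          ∫ ω, f (Real.sqrt (n1 n) * (lamhat1 n ω - lamr)) ∂P)
        atTop (𝓝 (∫ x, f x ∂(gaussianReal 0 Λ1.toNNReal))))
    (hclt2 : ∀ f : BoundedContinuousFunction ℝ ℝ,
      Tendsto (fun n : ℕ =>
          ∫ ω, f (Real.sqrt (n2 n) * (lamhat2 n ω - lamr)) ∂P)
        atTop (𝓝 (∫ x, f x ∂(gaussianReal 0 Λ2.toNNReal)))) :
    ∀ f : BoundedContinuousFunction ℝ ℝ,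
      Tendsto (fun n : ℕ =>
          ∫ ω, f ((n : ℝ) * |lamhat1 n ω - lamhat2 n ω| ^ 2
            / (Λ1 / q1 + Λ2 / q2)) ∂P)
        atTop
        (𝓝 (∫ x, f x ∂((gaussianReal 0 1).map (fun x => x ^ 2)))) := by
  set s := Λ1 / q1 + Λ2 / q2 with hs_def
  have hs : 0 < s := by positivity
  have hX : TendstoInDistribution (fun n ω ↦ √(n1 n) * (lamhat1 n ω - lamr)) atTop id
      (fun _ ↦ P) (gaussianReal 0 Λ1.toNNReal) :=
    (tendstoInDistribution_iff_forall_integral_tendsto (fun n ↦ by fun_prop)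
      aemeasurable_id).2 hclt1
  have hY : TendstoInDistribution (fun n ω ↦ √(n2 n) * (lamhat2 n ω - lamr)) atTop id
      (fun _ ↦ P) (gaussianReal 0 Λ2.toNNReal) :=
    (tendstoInDistribution_iff_forall_integral_tendsto (fun n ↦ by fun_prop)
      aemeasurable_id).2 hclt2
  have hXY := hX.prodMk_of_indepFun hY fun n ↦
    (hindep n).comp (φ := fun x ↦ √(n1 n) * (x - lamr)) (ψ := fun x ↦ √(n2 n) * (x - lamr))
      (by fun_prop) (by fun_prop)
  have hc : Tendsto (fun n : ℕ ↦ (√(n / (n1 n * s)), -√(n / (n2 n * s)))) atTop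
      (𝓝 (√((q1 * s)⁻¹), -√((q2 * s)⁻¹))) :=
    (tendsto_sqrt_div_mul hn1 hq1.ne' hs.ne').prodMk_nhds
      (tendsto_sqrt_div_mul hn2 hq2.ne' hs.ne').neg
  have hT := hXY.continuous_comp_prodMk_of_tendstoInMeasure_const
    (g := fun p : (ℝ × ℝ) × (ℝ × ℝ) ↦ (p.2.1 * p.1.1 + p.2.2 * p.1.2) ^ 2) (by fun_prop)
    (tendstoInMeasure_const_of_tendsto hc) fun _ ↦ aemeasurable_const
  have hvar : √((q1 * s)⁻¹) ^ 2 * Λ1.toNNReal + (-√((q2 * s)⁻¹)) ^ 2 * Λ2.toNNReal = 1 := by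
    rw [neg_sq, Real.sq_sqrt (by positivity), Real.sq_sqrt (by positivity),
      Real.coe_toNNReal _ hΛ1.le, Real.coe_toNNReal _ hΛ2.le, hs_def]
    field_simp
  intro f
  have hlim := (tendstoInDistribution_iff_forall_integral_tendsto
    (fun n ↦ by fun_prop) (by fun_prop)).1 hT f
  simp only [id] at hlim
  rw [← integral_map (by fun_prop) f.continuous.aestronglyMeasurable,
    gaussianReal_prod_map_sq_linear hvar] at hlim
  refine hlim.congr' ?_
  filter_upwards [eventually_pos_of_tendsto_div hn1 hq1, eventually_pos_of_tendsto_div hn2 hq2]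
    with n h1 h2
  refine integral_congr_ae (Eventually.of_forall fun ω ↦ congrArg f ?_)
  exact sq_rescaled_sub_eq n.cast_nonneg (by exact_mod_cast h1) (by exact_mod_cast h2) hs _ _ _
end
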